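/- The interval decomposition is unique: if S and T are two finite multisets of pairs (a,b) of integers with 0 ≤ a ≤ b ≤ 2n such that the direct sums of interval representations ⊕_{(a,b)∈S} I_{[a,b]} and ⊕_{(a,b)∈T} I_{[a,b]} are isomorphic as representations of the quiver (i.e. there are linear isomorphisms at each vertex commuting with all structure maps), then S = T as multisets. (Uniqueness part of Corollary 7.2.) -/

import Mathlib

/-!
For an interval `[u, v]`, the dimension of `Hom(I_[u,v], M)` is an isomorphism invariant of `M`.
For `M = ⊕ᵢ I_[aᵢ,bᵢ]` it counts the `i` with `Hom(I_[u,v], I_[aᵢ,bᵢ]) ≠ 0`, since each such Hom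
space is `k` or `0`. The relation "`Hom(I_[u,v], I_[A,B]) ≠ 0`" is reflexive and strictly
decreases an explicit rank of the endpoints, so the counts form a unitriangular system from which
the multiplicity of every interval is recovered by induction.
-/

namespace ThreeCusps

/-- The vertex `2j` (the target of the first arrow out of `2j+1`), as an element of
`Fin (2n+1)`, for `j : Fin n`. -/
def vA {n : ℕ} (j : Fin n) : Fin (2 * n + 1) := ⟨2 * (j : ℕ), by have := j.isLt; omega⟩

/-- The vertex `2j+1` (a source vertex of the quiver), as an element of `Fin (2n+1)`. -/
def vB {n : ℕ} (j : Fin n) : Fin (2 * n + 1) := ⟨2 * (j : ℕ) + 1, by have := j.isLt; omega⟩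

/-- The vertex `2j+2` (the target of the second arrow out of `2j+1`). -/
def vC {n : ℕ} (j : Fin n) : Fin (2 * n + 1) := ⟨2 * (j : ℕ) + 2, by have := j.isLt; omega⟩

/-- The vertex space, at the vertex `v`, of the direct sum of the interval
representations `I_{[a i, b i]}`, `i : Fin m`: one copy of `k` for each interval
containing `v`. -/
def IntervalSum (k : Type*) [Field k] {m : ℕ} (a b : Fin m → ℕ) (v : ℕ) : Type _ :=
  {i : Fin m // a i ≤ v ∧ v ≤ b i} → k

noncomputable instance (k : Type*) [Field k] {m : ℕ} (a b : Fin m → ℕ) (v : ℕ) :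
    AddCommGroup (IntervalSum k a b v) :=
  inferInstanceAs (AddCommGroup ({i : Fin m // a i ≤ v ∧ v ≤ b i} → k))

noncomputable instance (k : Type*) [Field k] {m : ℕ} (a b : Fin m → ℕ) (v : ℕ) :
    Module k (IntervalSum k a b v) :=
  inferInstanceAs (Module k ({i : Fin m // a i ≤ v ∧ v ≤ b i} → k))

/-- The structure map, from vertex `w` to vertex `w'`, of the direct sum of the interval
representations `I_{[a i, b i]}`: on the summand indexed by `i` it is the identity of
`k` if the interval `[a i, b i]` contains both `w` and `w'`, and `0` otherwise. -/
def stepMap (k : Type*) [Field k] {m : ℕ} (a b : Fin m → ℕ) (w w' : ℕ) :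
    IntervalSum k a b w →ₗ[k] IntervalSum k a b w' where
  toFun x j := if h : a j.1 ≤ w ∧ w ≤ b j.1 then x ⟨j.1, h⟩ else 0
  map_add' x y := by
    funext j
    show (if h : a j.1 ≤ w ∧ w ≤ b j.1 then (x + y) ⟨j.1, h⟩ else 0) =
      (if h : a j.1 ≤ w ∧ w ≤ b j.1 then x ⟨j.1, h⟩ else 0) +
        (if h : a j.1 ≤ w ∧ w ≤ b j.1 then y ⟨j.1, h⟩ else 0)
    by_cases h : a j.1 ≤ w ∧ w ≤ b j.1 <;> simp [IntervalSum, h] <;> rfl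
  map_smul' c x := by
    funext j
    show (if h : a j.1 ≤ w ∧ w ≤ b j.1 then (c • x) ⟨j.1, h⟩ else 0) =
      c • (if h : a j.1 ≤ w ∧ w ≤ b j.1 then x ⟨j.1, h⟩ else 0)
    by_cases h : a j.1 ≤ w ∧ w ≤ b j.1 <;> simp [IntervalSum, h] <;> rfl

end ThreeCusps

open Finset

theorem card_filter_rel_eq_card_fiber_add {α ι : Type*} [Fintype ι] [DecidableEq α]
    (R : α → α → Prop) [DecidableRel R] {x : α} (hx : R x x) (f : ι → α) (T : Finset α)
    (hT : ∀ i, f i ∈ T ↔ R x (f i) ∧ f i ≠ x) :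
    #{i | R x (f i)} = #{i | f i = x} + #{i | f i ∈ T} := by
  rw [← card_filter_add_card_filter_not (p := fun i => f i = x), filter_filter, filter_filter]
  congr 2
  · ext i
    simp only [mem_filter, mem_univ, true_and, and_iff_right_iff_imp]
    rintro rfl
    exact hx
  · ext i
    simp [hT]

theorem card_fiber_eq_of_card_filter_rel_eq {α ι₁ ι₂ : Type*} [Fintype ι₁] [Fintype ι₂]
    [DecidableEq α] (R : α → α → Prop) [DecidableRel R] (ρ : α → ℕ) (S : Set α)
    (hR : ∀ x ∈ S, R x x) (hρ : ∀ x ∈ S, ∀ y ∈ S, R x y → y ≠ x → ρ y < ρ x)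
    {f₁ : ι₁ → α} {f₂ : ι₂ → α} (hf₁ : ∀ i, f₁ i ∈ S) (hf₂ : ∀ i, f₂ i ∈ S)
    (h : ∀ x ∈ S, #{i | R x (f₁ i)} = #{i | R x (f₂ i)}) (x : α) :
    #{i | f₁ i = x} = #{i | f₂ i = x} := by
  induction hx : ρ x using Nat.strong_induction_on generalizing x with
  | _ r ih =>
  by_cases hxS : x ∈ S
  · set T := (univ.image f₁ ∪ univ.image f₂).filter (fun y => R x y ∧ y ≠ x)
    have hT : ∀ y ∈ T, #{i | f₁ i = y} = #{i | f₂ i = y} := by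
      intro y hy
      simp only [T, mem_filter, mem_union, mem_image, mem_univ, true_and] at hy
      have hyS : y ∈ S := by
        obtain ⟨⟨i, rfl⟩ | ⟨i, rfl⟩, -⟩ := hy
        exacts [hf₁ i, hf₂ i]
      exact ih _ (hx ▸ hρ x hxS y hyS hy.2.1 hy.2.2) y rfl
    have := h x hxS
    rw [card_filter_rel_eq_card_fiber_add R (hR x hxS) f₁ T (by simp [T]),
      card_filter_rel_eq_card_fiber_add R (hR x hxS) f₂ T (by simp [T]),
      ← sum_card_fiberwise_eq_card_filter, ← sum_card_fiberwise_eq_card_filter,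
      sum_congr rfl hT] at this
    omega
  · have hx₁ : #{i | f₁ i = x} = 0 :=
      card_eq_zero.2 (filter_eq_empty_iff.2 fun i _ hi => hxS (hi ▸ hf₁ i))
    have hx₂ : #{i | f₂ i = x} = 0 :=
      card_eq_zero.2 (filter_eq_empty_iff.2 fun i _ hi => hxS (hi ▸ hf₂ i))
    rw [hx₁, hx₂]

theorem exists_equiv_of_card_fiber_eq {α ι₁ ι₂ : Type*} [Fintype ι₁] [Fintype ι₂]
    [DecidableEq α] {f₁ : ι₁ → α} {f₂ : ι₂ → α} (h : ∀ x, #{i | f₁ i = x} = #{i | f₂ i = x}) :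
    ∃ e : ι₁ ≃ ι₂, ∀ i, f₂ (e i) = f₁ i :=
  ⟨Equiv.ofFiberEquiv fun x => Fintype.equivOfCardEq (by simpa [Fintype.card_subtype] using h x),
    Equiv.ofFiberEquiv_map _⟩

namespace ThreeCusps

section Zigzag

variable {k : Type*} [Field k] {n : ℕ}

/-- A morphism `I_[u,v] → M` is recorded by the images `y w` of `1 : k` at the vertices `w`. -/
def intervalHom (M : Fin (2 * n + 1) → Type*) [∀ w, AddCommGroup (M w)] [∀ w, Module k (M w)]
    (f : ∀ j, M (vB j) →ₗ[k] M (vA j)) (g : ∀ j, M (vB j) →ₗ[k] M (vC j)) (u v : ℕ) :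
    Submodule k (∀ w, M w) where
  carrier := {y | (∀ w : Fin (2 * n + 1), ¬(u ≤ w ∧ (w : ℕ) ≤ v) → y w = 0) ∧
    ∀ j, f j (y (vB j)) = (if u ≤ vA j ∧ (vB j : ℕ) ≤ v then y (vA j) else 0) ∧
      g j (y (vB j)) = if u ≤ vB j ∧ (vC j : ℕ) ≤ v then y (vC j) else 0}
  add_mem' := by
    rintro y z ⟨hy₀, hy⟩ ⟨hz₀, hz⟩
    refine ⟨fun w hw => by simp [hy₀ w hw, hz₀ w hw], fun j => ?_⟩
    simp only [Pi.add_apply, map_add, (hy j).1, (hy j).2, (hz j).1, (hz j).2]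
    constructor <;> split_ifs <;> simp
  zero_mem' := ⟨fun _ _ => rfl, fun j => by simp⟩
  smul_mem' := by
    rintro c y ⟨hy₀, hy⟩
    refine ⟨fun w hw => by simp [hy₀ w hw], fun j => ?_⟩
    simp only [Pi.smul_apply, map_smul, (hy j).1, (hy j).2]
    constructor <;> split_ifs <;> simp

variable {M N : Fin (2 * n + 1) → Type*} [∀ w, AddCommGroup (M w)] [∀ w, Module k (M w)]
  [∀ w, AddCommGroup (N w)] [∀ w, Module k (N w)]
  {f : ∀ j, M (vB j) →ₗ[k] M (vA j)} {g : ∀ j, M (vB j) →ₗ[k] M (vC j)}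
  {f' : ∀ j, N (vB j) →ₗ[k] N (vA j)} {g' : ∀ j, N (vB j) →ₗ[k] N (vC j)}

theorem map_mem_intervalHom (φ : ∀ w, M w →ₗ[k] N w)
    (hf : ∀ j x, φ (vA j) (f j x) = f' j (φ (vB j) x))
    (hg : ∀ j x, φ (vC j) (g j x) = g' j (φ (vB j) x)) {u v : ℕ} {y : ∀ w, M w}
    (hy : y ∈ intervalHom M f g u v) : (fun w => φ w (y w)) ∈ intervalHom N f' g' u v := by
  obtain ⟨hy₀, hy⟩ := hy
  refine ⟨fun w hw => by simp [hy₀ w hw], fun j => ?_⟩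
  simp only [← hf, ← hg, (hy j).1, (hy j).2]
  constructor <;> split_ifs <;> simp

theorem finrank_intervalHom_eq_of_linearEquiv (φ : ∀ w, M w ≃ₗ[k] N w)
    (hf : ∀ j x, φ (vA j) (f j x) = f' j (φ (vB j) x))
    (hg : ∀ j x, φ (vC j) (g j x) = g' j (φ (vB j) x)) (u v : ℕ) :
    Module.finrank k (intervalHom M f g u v) = Module.finrank k (intervalHom N f' g' u v) := by
  have symm_comm : ∀ {w w' : Fin (2 * n + 1)} (h : M w →ₗ[k] M w') (h' : N w →ₗ[k] N w'),
      (∀ x, φ w' (h x) = h' (φ w x)) → ∀ x, (φ w').symm (h' x) = h ((φ w).symm x) := by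
    intro w w' h h' hh x
    rw [LinearEquiv.symm_apply_eq, hh, LinearEquiv.apply_symm_apply]
  have hmap : (intervalHom M f g u v).map (LinearEquiv.piCongrRight φ).toLinearMap =
      intervalHom N f' g' u v := by
    refine le_antisymm (Submodule.map_le_iff_le_comap.2 fun y hy => map_mem_intervalHom
      (fun w => (φ w).toLinearMap) hf hg hy) fun z hz => ?_
    rw [Submodule.map_equiv_eq_comap_symm]
    exact map_mem_intervalHom (fun w => (φ w).symm.toLinearMap) (symm_comm _ _ <| hf ·)
      (symm_comm _ _ <| hg ·) hz
  rw [← hmap, LinearEquiv.finrank_map_eq]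

end Zigzag

/-- `Hom(I_[u,v], I_[A,B]) ≠ 0`: the intervals meet, and `[A,B]` may start after `u` only at a
source (odd) vertex and before `u` only if `u` is a sink (even); dually at the right ends. -/
def HomNonzero (u v A B : ℕ) : Prop :=
  A ≤ v ∧ u ≤ B ∧ (A = u ∨ (u < A ∧ A % 2 = 1) ∨ (A < u ∧ u % 2 = 0)) ∧
    (B = v ∨ (B < v ∧ B % 2 = 1) ∨ (v < B ∧ v % 2 = 0))

instance (u v A B : ℕ) : Decidable (HomNonzero u v A B) := by
  unfold HomNonzero; infer_instance

theorem homNonzero_self {u v : ℕ} (h : u ≤ v) : HomNonzero u v u v :=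
  ⟨h, h, Or.inl rfl, Or.inl rfl⟩

/-- Odd left ends rank below even ones, the odd ones in decreasing and the even ones in increasing
order; dually for right ends. -/
def endpointRank (n A B : ℕ) : ℕ :=
  (if A % 2 = 1 then 2 * n - A else 2 * n + 1 + A) + (if B % 2 = 1 then B else 4 * n + 1 - B)

theorem endpointRank_lt_of_homNonzero {n u v A B : ℕ} (hB : B ≤ 2 * n) (hv : v ≤ 2 * n)
    (h : HomNonzero u v A B) (hne : (A, B) ≠ (u, v)) :
    endpointRank n A B < endpointRank n u v := by
  simp only [ne_eq, Prod.mk.injEq] at hne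
  unfold HomNonzero at h; unfold endpointRank; split_ifs <;> omega

/-- `c w` is the scalar by which a morphism `I_[u,v] → I_[A,B]` acts at the vertex `w`. -/
structure IsIntervalMorphism {k : Type*} [Field k] (n u v A B : ℕ) (c : ℕ → k) : Prop where
  eq_zero : ∀ w, ¬(u ≤ w ∧ w ≤ v ∧ A ≤ w ∧ w ≤ B) → c w = 0
  comm_left : ∀ j < n, A ≤ 2 * j → 2 * j ≤ B →
    c (2 * j + 1) = if u ≤ 2 * j ∧ 2 * j + 1 ≤ v then c (2 * j) else 0
  comm_right : ∀ j < n, A ≤ 2 * j + 2 → 2 * j + 2 ≤ B →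
    c (2 * j + 1) = if u ≤ 2 * j + 1 ∧ 2 * j + 2 ≤ v then c (2 * j + 2) else 0

namespace IsIntervalMorphism

variable {k : Type*} [Field k] {n u v A B : ℕ} {c : ℕ → k}

theorem apply_succ (hc : IsIntervalMorphism n u v A B c) (hv : v ≤ 2 * n) {w : ℕ}
    (hu : u ≤ w) (hA : A ≤ w) (hwv : w + 1 ≤ v) (hwB : w + 1 ≤ B) : c (w + 1) = c w := by
  obtain ⟨j, rfl | rfl⟩ := Nat.even_or_odd' w
  · rw [hc.comm_left j (by omega) hA (by omega), if_pos ⟨hu, hwv⟩]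
  · rw [hc.comm_right j (by omega) (by omega) hwB, if_pos ⟨hu, hwv⟩]

theorem apply_eq_apply_max (hc : IsIntervalMorphism n u v A B c) (hv : v ≤ 2 * n) {w : ℕ}
    (hu : u ≤ w) (hA : A ≤ w) (hwv : w ≤ v) (hwB : w ≤ B) : c w = c (max u A) := by
  induction w, (max_le hu hA : max u A ≤ w) using Nat.le_induction with
  | base => rfl
  | succ w hw ih =>
    rw [hc.apply_succ hv (by omega) (by omega) hwv hwB,
      ih (by omega) (by omega) (by omega) (by omega)]

theorem apply_eq_zero (hc : IsIntervalMorphism n u v A B c) (hv : v ≤ 2 * n)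
    (h : ¬HomNonzero u v A B) (w : ℕ) : c w = 0 := by
  by_cases hw : u ≤ w ∧ w ≤ v ∧ A ≤ w ∧ w ≤ B
  case neg => exact hc.eq_zero w hw
  suffices ∃ t, u ≤ t ∧ A ≤ t ∧ t ≤ v ∧ t ≤ B ∧ c t = 0 by
    obtain ⟨t, ht⟩ := this
    rw [hc.apply_eq_apply_max hv hw.1 hw.2.2.1 hw.2.1 hw.2.2.2,
      ← hc.apply_eq_apply_max hv ht.1 ht.2.1 ht.2.2.1 ht.2.2.2.1, ht.2.2.2.2]
  -- Each way of failing `HomNonzero` makes one arrow force `c = 0` at a vertex of the overlap.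
  unfold HomNonzero at h
  rcases (by omega : (u < A ∧ A % 2 = 0) ∨ (A < u ∧ u % 2 = 1) ∨
      (B < v ∧ B % 2 = 0) ∨ (v < B ∧ v % 2 = 1)) with
    ⟨hlt, hpar⟩ | ⟨hlt, hpar⟩ | ⟨hlt, hpar⟩ | ⟨hlt, hpar⟩
  · obtain ⟨j, rfl⟩ : ∃ j, A = 2 * j + 2 := ⟨A / 2 - 1, by omega⟩
    have := hc.comm_right j (by omega) le_rfl (by omega)
    rw [hc.eq_zero _ (by omega), if_pos (by omega)] at this
    exact ⟨2 * j + 2, by omega, le_rfl, by omega, by omega, this.symm⟩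
  · obtain ⟨j, rfl⟩ : ∃ j, u = 2 * j + 1 := ⟨u / 2, by omega⟩
    have := hc.comm_left j (by omega) (by omega) (by omega)
    rw [if_neg (by omega)] at this
    exact ⟨2 * j + 1, le_rfl, by omega, by omega, by omega, this⟩
  · obtain ⟨j, rfl⟩ : ∃ j, B = 2 * j := ⟨B / 2, by omega⟩
    have := hc.comm_left j (by omega) (by omega) le_rfl
    rw [hc.eq_zero _ (by omega), if_pos (by omega)] at this
    exact ⟨2 * j, by omega, by omega, by omega, le_rfl, this.symm⟩
  · obtain ⟨j, rfl⟩ : ∃ j, v = 2 * j + 1 := ⟨v / 2, by omega⟩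
    have := hc.comm_right j (by omega) (by omega) (by omega)
    rw [if_neg (by omega)] at this
    exact ⟨2 * j + 1, by omega, by omega, le_rfl, by omega, this⟩

theorem apply_eq (hc : IsIntervalMorphism n u v A B c) (hv : v ≤ 2 * n) (w : ℕ) :
    c w = if HomNonzero u v A B ∧ u ≤ w ∧ A ≤ w ∧ w ≤ v ∧ w ≤ B then c (max u A) else 0 := by
  split_ifs with h
  · exact hc.apply_eq_apply_max hv h.2.1 h.2.2.1 h.2.2.2.1 h.2.2.2.2
  · by_cases hw : u ≤ w ∧ A ≤ w ∧ w ≤ v ∧ w ≤ B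
    · exact hc.apply_eq_zero hv (fun h' => h ⟨h', hw⟩) w
    · exact hc.eq_zero w (by omega)

end IsIntervalMorphism

theorem isIntervalMorphism_indicator {k : Type*} [Field k] (n : ℕ) {u v A B : ℕ} (x : k) :
    IsIntervalMorphism n u v A B
      (fun w => if HomNonzero u v A B ∧ u ≤ w ∧ w ≤ v ∧ A ≤ w ∧ w ≤ B then x else 0) where
  eq_zero w hw := if_neg fun h => hw h.2
  comm_left j _ _ _ := by unfold HomNonzero; split_ifs <;> first | rfl | omega
  comm_right j _ _ _ := by unfold HomNonzero; split_ifs <;> first | rfl | omega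

section IntervalSum

variable {k : Type*} [Field k] {n m : ℕ} {a b : Fin m → ℕ}

variable (k n a b) in
noncomputable abbrev intervalSumHom (u v : ℕ) :
    Submodule k (∀ w : Fin (2 * n + 1), IntervalSum k a b w) :=
  intervalHom (fun w => IntervalSum k a b w) (fun j => stepMap k a b (vB j) (vA j))
    (fun j => stepMap k a b (vB j) (vC j)) u v

noncomputable def component (i : Fin m) (w : ℕ) :
    (∀ w : Fin (2 * n + 1), IntervalSum k a b w) →ₗ[k] k :=
  if h : w < 2 * n + 1 ∧ a i ≤ w ∧ w ≤ b i then
    (LinearMap.proj (R := k) (φ := fun _ => k) (⟨i, h.2⟩ : {j // a j ≤ w ∧ w ≤ b j})).comp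
      (LinearMap.proj (φ := fun w : Fin (2 * n + 1) => IntervalSum k a b w) ⟨w, h.1⟩)
  else 0

theorem component_apply (i : Fin m) (w : ℕ) (y : ∀ w : Fin (2 * n + 1), IntervalSum k a b w) :
    component i w y =
      if h : w < 2 * n + 1 ∧ a i ≤ w ∧ w ≤ b i then y ⟨w, h.1⟩ ⟨i, h.2⟩ else 0 := by
  unfold component
  split_ifs <;> rfl

theorem component_of_mem (y : ∀ w : Fin (2 * n + 1), IntervalSum k a b w) {i : Fin m}
    {w : Fin (2 * n + 1)} (h : a i ≤ w ∧ w ≤ b i) : component i w y = y w ⟨i, h⟩ := by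
  rw [component_apply, dif_pos ⟨w.isLt, h⟩]

theorem stepMap_apply_eq_component (y : ∀ w : Fin (2 * n + 1), IntervalSum k a b w)
    (w : Fin (2 * n + 1)) {w' : ℕ} (i : {i : Fin m // a i ≤ w' ∧ w' ≤ b i}) :
    stepMap k a b w w' (y w) i = component i w y := by
  show (if h : a i.1 ≤ w ∧ (w : ℕ) ≤ b i.1 then y w ⟨i.1, h⟩ else 0) = _
  split_ifs with h
  · exact (component_of_mem y h).symm
  · rw [component_apply, dif_neg fun h' => h h'.2]

theorem ite_apply_eq_component (y : ∀ w : Fin (2 * n + 1), IntervalSum k a b w) (p : Prop)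
    [Decidable p] (w : Fin (2 * n + 1)) (i : {i : Fin m // a i ≤ w ∧ (w : ℕ) ≤ b i}) :
    (if p then y w else 0) i = if p then component i w y else 0 := by
  split_ifs
  · exact (component_of_mem y i.2).symm
  · rfl

theorem mem_intervalSumHom_iff {u v : ℕ} {y : ∀ w : Fin (2 * n + 1), IntervalSum k a b w} :
    y ∈ intervalSumHom k n a b u v ↔
      ∀ i, IsIntervalMorphism n u v (a i) (b i) (component i · y) := by
  constructor
  · intro hy i
    refine ⟨fun w hw => ?_, fun j hj hA hB => ?_, fun j hj hA hB => ?_⟩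
    · rw [component_apply]
      split_ifs with h
      · rw [hy.1 ⟨w, h.1⟩ (by simp only; omega)]; rfl
      · rfl
    · have := congrFun (hy.2 ⟨j, hj⟩).1 ⟨i, hA, hB⟩
      rwa [stepMap_apply_eq_component, ite_apply_eq_component] at this
    · have := congrFun (hy.2 ⟨j, hj⟩).2 ⟨i, hA, hB⟩
      rwa [stepMap_apply_eq_component, ite_apply_eq_component] at this
  · intro hy
    refine ⟨fun w hw => funext fun i => ?_, fun j => ⟨funext fun i => ?_, funext fun i => ?_⟩⟩
    · rw [← component_of_mem y i.2]
      exact (hy i).eq_zero w (by omega)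
    · rw [stepMap_apply_eq_component, ite_apply_eq_component]
      exact (hy i).comm_left j j.2 i.2.1 i.2.2
    · rw [stepMap_apply_eq_component, ite_apply_eq_component]
      exact (hy i).comm_right j j.2 i.2.1 i.2.2

variable {u v : ℕ}

variable (n a b u v) in
def intervalSumHomOfScalars (s : Fin m → k) : ∀ w : Fin (2 * n + 1), IntervalSum k a b w :=
  fun w i => if HomNonzero u v (a i) (b i) ∧ u ≤ w ∧ (w : ℕ) ≤ v then s i else 0

theorem component_intervalSumHomOfScalars (hv : v ≤ 2 * n) (s : Fin m → k) (i : Fin m)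
    (w : ℕ) :
    component i w (intervalSumHomOfScalars n a b u v s) =
      if HomNonzero u v (a i) (b i) ∧ u ≤ w ∧ w ≤ v ∧ a i ≤ w ∧ w ≤ b i then s i else 0 := by
  rw [component_apply]
  dsimp only [intervalSumHomOfScalars]
  by_cases hH : HomNonzero u v (a i) (b i)
  · simp only [hH, true_and]
    split_ifs <;> first | rfl | omega
  · simp [hH]

theorem intervalSumHomOfScalars_mem (hv : v ≤ 2 * n) (s : Fin m → k) :
    intervalSumHomOfScalars n a b u v s ∈ intervalSumHom k n a b u v := by
  rw [mem_intervalSumHom_iff]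
  intro i
  simp only [component_intervalSumHomOfScalars hv]
  exact isIntervalMorphism_indicator n (s i)

noncomputable def scalarsOfIntervalSumHom :
    intervalSumHom k n a b u v →ₗ[k] {i : Fin m // HomNonzero u v (a i) (b i)} → k :=
  LinearMap.pi fun i => component i.1 (max u (a i.1)) ∘ₗ (intervalSumHom k n a b u v).subtype

theorem scalarsOfIntervalSumHom_bijective (h : ∀ i, a i ≤ b i) (huv : u ≤ v) (hv : v ≤ 2 * n) :
    Function.Bijective (scalarsOfIntervalSumHom : intervalSumHom k n a b u v →ₗ[k] _) := by
  refine ⟨(injective_iff_map_eq_zero _).2 fun y hy => ?_, fun t => ?_⟩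
  · refine Subtype.ext (funext fun w => funext fun i => ?_)
    rw [← component_of_mem y.1 i.2, (mem_intervalSumHom_iff.1 y.2 i).apply_eq hv]
    split_ifs with hi
    · exact congrFun hy ⟨i, hi.1⟩
    · rfl
  · classical
    let s : Fin m → k := fun i => if hi : HomNonzero u v (a i) (b i) then t ⟨i, hi⟩ else 0
    refine ⟨⟨_, intervalSumHomOfScalars_mem hv s⟩, funext fun i => ?_⟩
    have hi := i.2
    have := h i
    unfold HomNonzero at hi
    simp only [scalarsOfIntervalSumHom, LinearMap.pi_apply, LinearMap.comp_apply,
      Submodule.subtype_apply, component_intervalSumHomOfScalars hv]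
    rw [if_pos ⟨i.2, by omega⟩]
    exact dif_pos i.2

variable (k) in
theorem finrank_intervalSumHom (h : ∀ i, a i ≤ b i ∧ b i ≤ 2 * n) (huv : u ≤ v)
    (hv : v ≤ 2 * n) :
    Module.finrank k (intervalSumHom k n a b u v) = #{i | HomNonzero u v (a i) (b i)} := by
  rw [LinearEquiv.finrank_eq (LinearEquiv.ofBijective _ (scalarsOfIntervalSumHom_bijective
    (fun i => (h i).1) huv hv)), Module.finrank_fintype_fun_eq_card, Fintype.card_subtype]

end IntervalSum

theorem stmt3_general (k : Type*) [Field k] (n : ℕ)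
    (m₁ m₂ : ℕ) (a₁ b₁ : Fin m₁ → ℕ) (a₂ b₂ : Fin m₂ → ℕ)
    (h₁ : ∀ i, a₁ i ≤ b₁ i ∧ b₁ i ≤ 2 * n)
    (h₂ : ∀ i, a₂ i ≤ b₂ i ∧ b₂ i ≤ 2 * n)
    (φ : ∀ v : Fin (2 * n + 1), IntervalSum k a₁ b₁ (v : ℕ) ≃ₗ[k] IntervalSum k a₂ b₂ (v : ℕ))
    (hf : ∀ (j : Fin n) (x : IntervalSum k a₁ b₁ (vB j : ℕ)),
      φ (vA j) (stepMap k a₁ b₁ (vB j : ℕ) (vA j : ℕ) x) =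
        stepMap k a₂ b₂ (vB j : ℕ) (vA j : ℕ) (φ (vB j) x))
    (hg : ∀ (j : Fin n) (x : IntervalSum k a₁ b₁ (vB j : ℕ)),
      φ (vC j) (stepMap k a₁ b₁ (vB j : ℕ) (vC j : ℕ) x) =
        stepMap k a₂ b₂ (vB j : ℕ) (vC j : ℕ) (φ (vB j) x)) :
    ∃ e : Fin m₁ ≃ Fin m₂, ∀ i, a₂ (e i) = a₁ i ∧ b₂ (e i) = b₁ i := by
  have hcount : ∀ p ∈ {p : ℕ × ℕ | p.1 ≤ p.2 ∧ p.2 ≤ 2 * n},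
      #{i | HomNonzero p.1 p.2 (a₁ i) (b₁ i)} = #{i | HomNonzero p.1 p.2 (a₂ i) (b₂ i)} := by
    rintro ⟨u, v⟩ ⟨huv, hv⟩
    rw [← finrank_intervalSumHom k h₁ huv hv, ← finrank_intervalSumHom k h₂ huv hv]
    exact finrank_intervalHom_eq_of_linearEquiv φ hf hg u v
  obtain ⟨e, he⟩ := exists_equiv_of_card_fiber_eq <|
    card_fiber_eq_of_card_filter_rel_eq (fun p q : ℕ × ℕ => HomNonzero p.1 p.2 q.1 q.2)
      (fun p => endpointRank n p.1 p.2) _ (fun p hp => homNonzero_self hp.1)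
      (fun _ hx _ hy => endpointRank_lt_of_homNonzero hy.2 hx.2)
      (f₁ := fun i => (a₁ i, b₁ i)) (f₂ := fun i => (a₂ i, b₂ i)) h₁ h₂ hcount
  exact ⟨e, fun i => Prod.ext_iff.1 (he i)⟩

/-- **Corollary 7.2 (uniqueness part).** The interval decomposition is unique: if two
finite families of intervals `[a₁ i, b₁ i]` (`i : Fin m₁`) and `[a₂ i, b₂ i]`
(`i : Fin m₂`), with `0 ≤ a ≤ b ≤ 2n`, give isomorphic direct sums of interval
representations of the quiver (isomorphisms at each vertex commuting with all structure
maps), then the two families coincide as multisets: there is a bijection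
`e : Fin m₁ ≃ Fin m₂` matching the intervals. -/
theorem stmt3 (k : Type*) [Field k] (n : ℕ) (hn : 1 ≤ n)
    (m₁ m₂ : ℕ) (a₁ b₁ : Fin m₁ → ℕ) (a₂ b₂ : Fin m₂ → ℕ)
    (h₁ : ∀ i, a₁ i ≤ b₁ i ∧ b₁ i ≤ 2 * n)
    (h₂ : ∀ i, a₂ i ≤ b₂ i ∧ b₂ i ≤ 2 * n)
    (φ : ∀ v : Fin (2 * n + 1), IntervalSum k a₁ b₁ (v : ℕ) ≃ₗ[k] IntervalSum k a₂ b₂ (v : ℕ))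
    (hf : ∀ (j : Fin n) (x : IntervalSum k a₁ b₁ (vB j : ℕ)),
      φ (vA j) (stepMap k a₁ b₁ (vB j : ℕ) (vA j : ℕ) x) =
        stepMap k a₂ b₂ (vB j : ℕ) (vA j : ℕ) (φ (vB j) x))
    (hg : ∀ (j : Fin n) (x : IntervalSum k a₁ b₁ (vB j : ℕ)),
      φ (vC j) (stepMap k a₁ b₁ (vB j : ℕ) (vC j : ℕ) x) =
        stepMap k a₂ b₂ (vB j : ℕ) (vC j : ℕ) (φ (vB j) x)) :
    ∃ e : Fin m₁ ≃ Fin m₂, ∀ i, a₂ (e i) = a₁ i ∧ b₂ (e i) = b₁ i :=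
  stmt3_general k n m₁ m₂ a₁ b₁ a₂ b₂ h₁ h₂ φ hf hg

end ThreeCusps
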